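/- Let I ⊆ S = K[x_1,…,x_n] be a matroidal ideal generated in degree d, and let s denote the number of connected components of the linear relation graph Γ_I of I. Then s ≤ d. -/

import Mathlib

open MvPolynomial

noncomputable section

/-- The depth of `S/I` as a module over `S = K[x_1,…,x_n]` with respect to the graded
maximal ideal `𝔪 = (x_1,…,x_n)`: the supremum of lengths of regular sequences on `S/I`
consisting of elements of `𝔪`. -/
def mDepth (n : ℕ) (K : Type*) [Field K] (I : Ideal (MvPolynomial (Fin n) K)) : ℕ :=
  sSup {k : ℕ | ∃ rs : List (MvPolynomial (Fin n) K), rs.length = k ∧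
    (∀ r ∈ rs, r ∈ Ideal.span (Set.range (X : Fin n → MvPolynomial (Fin n) K))) ∧
    RingTheory.Sequence.IsRegular (MvPolynomial (Fin n) K ⧸ I) rs}

/-- `I` has a constant depth function: `depth S/I^k = depth S/I` for all `k ≥ 1`. -/
def HasConstantDepthFunction (n : ℕ) (K : Type*) [Field K]
    (I : Ideal (MvPolynomial (Fin n) K)) : Prop :=
  ∀ k : ℕ, 1 ≤ k → mDepth n K (I ^ k) = mDepth n K I

/-- The depth of a Noetherian local ring: supremum of lengths of regular sequences
contained in the maximal ideal. -/
def localRingDepth (R : Type*) [CommRing R] [IsLocalRing R] : ℕ :=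
  sSup {k : ℕ | ∃ rs : List R, rs.length = k ∧
    (∀ r ∈ rs, r ∈ IsLocalRing.maximalIdeal R) ∧
    RingTheory.Sequence.IsRegular R rs}

/-- A commutative ring is Cohen–Macaulay if for every prime `p` the localization at `p`
has depth equal to its Krull dimension. -/
def IsCohenMacaulayRing (R : Type*) [CommRing R] : Prop :=
  ∀ (p : Ideal R) [p.IsPrime],
    ringKrullDim (Localization.AtPrime p) =
      (localRingDepth (Localization.AtPrime p) : WithBot ℕ∞)

/-- `I` is a monomial ideal generated by monomials in the variables from `T`. -/
def IsMonomialIdealOn (n : ℕ) (K : Type*) [Field K]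
    (I : Ideal (MvPolynomial (Fin n) K)) (T : Set (Fin n)) : Prop :=
  ∃ A : Set (Fin n →₀ ℕ), (∀ a ∈ A, (a.support : Set (Fin n)) ⊆ T) ∧
    I = Ideal.span ((fun a => (monomial a (1 : K) : MvPolynomial (Fin n) K)) '' A)

/-- `I` is a monomial ideal. -/
def IsMonomialIdeal (n : ℕ) (K : Type*) [Field K]
    (I : Ideal (MvPolynomial (Fin n) K)) : Prop :=
  IsMonomialIdealOn n K I Set.univ

/-- `I` and `J` are monomial ideals generated in disjoint sets of variables. -/
def GeneratedInDisjointVars (n : ℕ) (K : Type*) [Field K]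
    (I J : Ideal (MvPolynomial (Fin n) K)) : Prop :=
  ∃ T₁ T₂ : Set (Fin n), Disjoint T₁ T₂ ∧
    IsMonomialIdealOn n K I T₁ ∧ IsMonomialIdealOn n K J T₂

/-- The ideal of the Rees algebra `R(I)` generated by the image of the graded maximal
ideal `𝔪 ⊆ S`. -/
def fiberIdeal (n : ℕ) (K : Type*) [Field K] (I : Ideal (MvPolynomial (Fin n) K)) :
    Ideal (reesAlgebra I) :=
  Ideal.span ((algebraMap (MvPolynomial (Fin n) K) (reesAlgebra I)) ''
    ((Ideal.span (Set.range (X : Fin n → MvPolynomial (Fin n) K)) :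
      Ideal (MvPolynomial (Fin n) K)) : Set (MvPolynomial (Fin n) K)))

/-- The analytic spread `ℓ(I)`: the Krull dimension of the fiber ring
`R(I)/𝔪R(I)` of the Rees algebra of `I`. -/
def analyticSpread (n : ℕ) (K : Type*) [Field K]
    (I : Ideal (MvPolynomial (Fin n) K)) : ℕ :=
  ((ringKrullDim ((reesAlgebra I) ⧸ fiberIdeal n K I)).unbotD 0).untopD 0

/-- `B` is the set of supports of the minimal monomial generators of a matroidal ideal
generated in degree `d`: a nonempty family of `d`-subsets of the variables satisfying
the exchange property. -/
def IsMatroidalGens (n d : ℕ) (B : Finset (Finset (Fin n))) : Prop :=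
  B.Nonempty ∧ (∀ u ∈ B, u.card = d) ∧
    ∀ u ∈ B, ∀ v ∈ B, ∀ i ∈ u, i ∉ v →
      ∃ j, j ∈ v ∧ j ∉ u ∧ insert j (u.erase i) ∈ B

/-- The squarefree monomial ideal whose minimal generators are the monomials
`∏_{i ∈ u} x_i`, `u ∈ B`. -/
def sqfreeIdeal (n : ℕ) (K : Type*) [Field K] (B : Finset (Finset (Fin n))) :
    Ideal (MvPolynomial (Fin n) K) :=
  Ideal.span ((fun u : Finset (Fin n) => ∏ i ∈ u, (X i : MvPolynomial (Fin n) K)) '' B)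

/-- The linear relation graph `Γ_I` of the squarefree monomial ideal with generators `B`:
`{x_i, x_j}` is an edge iff there are generators `u_k, u_l` with `x_i u_k = x_j u_l`. -/
def linRelGraph (n : ℕ) (B : Finset (Finset (Fin n))) : SimpleGraph (Fin n) :=
  SimpleGraph.fromRel (fun i j => ∃ u ∈ B, j ∈ u ∧ i ∉ u ∧ insert i (u.erase j) ∈ B)

/-- The vertex set `V(Γ_I)` of the linear relation graph. -/
def linRelVerts (n : ℕ) (B : Finset (Finset (Fin n))) : Set (Fin n) :=
  {i | ∃ j, (linRelGraph n B).Adj i j}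

/-- The number `s` of connected components of the linear relation graph `Γ_I`
(as a graph on its vertex set `V(Γ_I)`). -/
noncomputable def numComponentsLRG (n : ℕ) (B : Finset (Finset (Fin n))) : ℕ :=
  Nat.card ((linRelGraph n B).induce (linRelVerts n B)).ConnectedComponent


/-! Fix a generator `u ∈ B`. If `i` is a vertex of `Γ_I` not in `u`, pick a generator `u'`
containing `i`; the exchange property for `u'`, `u` and `i` yields `j ∈ u \ u'` with
`x_j u' = x_i (u' \ {i} ∪ {j})`, an edge `{x_i, x_j}`. So every component of `Γ_I` meets `u`,
and there are at most `|u| = d` components. -/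

theorem SimpleGraph.card_connectedComponent_le_of_forall_reachable {V : Type*}
    (G : SimpleGraph V) (s : Set V) [Finite s] (h : ∀ v, ∃ w ∈ s, G.Reachable v w) :
    Nat.card G.ConnectedComponent ≤ Nat.card s :=
  Nat.card_le_card_of_surjective (fun w : s => G.connectedComponentMk w) fun c =>
    c.ind fun v =>
      let ⟨w, hw, hvw⟩ := h v
      ⟨⟨w, hw⟩, (SimpleGraph.ConnectedComponent.sound hvw).symm⟩

section LinearRelationGraph

variable {n : ℕ} {B : Finset (Finset (Fin n))}

theorem linRelGraph_adj_of_exchange {u : Finset (Fin n)} (hu : u ∈ B) {i j : Fin n}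
    (hi : i ∈ u) (hj : j ∉ u) (hex : insert j (u.erase i) ∈ B) : (linRelGraph n B).Adj j i :=
  (SimpleGraph.fromRel_adj _ _ _).2 ⟨fun h => hj (h ▸ hi), Or.inl ⟨u, hu, hi, hj, hex⟩⟩

theorem exists_mem_of_mem_linRelVerts {i : Fin n} (hi : i ∈ linRelVerts n B) :
    ∃ u ∈ B, i ∈ u := by
  obtain ⟨j, hij⟩ := hi
  obtain ⟨-, ⟨u, hu, -, -, hex⟩ | ⟨u, hu, hiu, -⟩⟩ := (SimpleGraph.fromRel_adj _ _ _).1 hij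
  · exact ⟨_, hex, Finset.mem_insert_self _ _⟩
  · exact ⟨u, hu, hiu⟩

theorem IsMatroidalGens.exists_mem_reachable {d : ℕ} (hB : IsMatroidalGens n d B)
    {u : Finset (Fin n)} (hu : u ∈ B) (v : linRelVerts n B) :
    ∃ w ∈ {w : linRelVerts n B | w.1 ∈ u},
      ((linRelGraph n B).induce (linRelVerts n B)).Reachable v w := by
  by_cases hvu : v.1 ∈ u
  · exact ⟨v, hvu, .refl v⟩
  obtain ⟨u', hu', hvu'⟩ := exists_mem_of_mem_linRelVerts v.2
  obtain ⟨j, hju, hju', hex⟩ := hB.2.2 u' hu' u hu v hvu' hvu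
  have hadj : (linRelGraph n B).Adj j v := linRelGraph_adj_of_exchange hu' hvu' hju' hex
  exact ⟨⟨j, v, hadj⟩, hju, SimpleGraph.Adj.reachable (G := (linRelGraph n B).induce _) hadj.symm⟩

end LinearRelationGraph

theorem numComponents_le_degree_general (n d : ℕ)
    (B : Finset (Finset (Fin n))) (hB : IsMatroidalGens n d B) :
    numComponentsLRG n B ≤ d := by
  obtain ⟨u, hu⟩ := hB.1
  calc numComponentsLRG n B ≤ Nat.card {w : linRelVerts n B | w.1 ∈ u} :=
        SimpleGraph.card_connectedComponent_le_of_forall_reachable _ _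
          (hB.exists_mem_reachable hu)
    _ ≤ Nat.card u :=
        Nat.card_le_card_of_injective (fun w => ⟨w.1.1, w.2⟩) fun w w' h => by
          simp only [Subtype.mk.injEq] at h; exact Subtype.ext (Subtype.ext h)
    _ = d := by simpa using hB.2.1 u hu

/-- Let `I` be a matroidal ideal generated in degree `d`, and let `s` be
the number of connected components of its linear relation graph `Γ_I`. Then `s ≤ d`. -/
theorem numComponents_le_degree (n d : ℕ) (K : Type*) [Field K]
    (B : Finset (Finset (Fin n))) (hB : IsMatroidalGens n d B)
    (I : Ideal (MvPolynomial (Fin n) K)) (hI : I = sqfreeIdeal n K B) :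
    numComponentsLRG n B ≤ d :=
  numComponents_le_degree_general n d B hB
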